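/- Let A : (ℝⁿ)* → ℝⁿ be invertible and define the twisted Hodge operator *^A on l-forms by the requirement ω ∧ (*^A μ) = (ω|μ)_A dx₁∧⋯∧dxₙ for all l-forms ω, μ, where (ω|μ)_A = ⟨(∧ˡA)ω, μ⟩. Let ι : (ℝⁿ)* → ℝⁿ be the identification given by the standard Euclidean structure and * the standard Hodge star. Then: (i) *^A = * ∘ ∧ˡ(ι⁻¹Aᵗ) on l-forms; (ii) *^A is invertible with (*^A)⁻¹ = (−1)^{l(n−l)} ∧ˡ(ι⁻¹Aᵗ)⁻¹ ∘ * on (n−l)-forms; (iii) for an l-form ω and an (n−l)-form μ, (*^A ω) ∧ (*^A μ) = det(ι⁻¹Aᵗ) · ω ∧ μ. -/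

import Mathlib

open Finset

noncomputable section

abbrev FormIdx (n k : ℕ) := {s : Finset (Fin n) // s.card = k}

abbrev KForm (n k : ℕ) := FormIdx n k → ℝ

def subEmb {n k : ℕ} (S : FormIdx n k) : Fin k → Fin n := fun j => (S.1.orderIsoOfFin S.2 j : Fin n)

/-- the bilinear pairing `(ω|μ)_A = ⟨(∧ˡA)ω, μ⟩` -/
def pairingA {n k : ℕ} (A : Matrix (Fin n) (Fin n) ℝ) (u v : KForm n k) : ℝ :=
  ∑ T : FormIdx n k, ∑ S : FormIdx n k,
    (A.submatrix (subEmb S) (subEmb T)).det * u T * v S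

/-- the linear map on `k`-forms induced by a matrix acting on covectors
(e.g. `formMap Aᵀ = ∧ᵏ(ι⁻¹Aᵗ)`) -/
def formMap {n k : ℕ} (B : Matrix (Fin n) (Fin n) ℝ) (u : KForm n k) : KForm n k :=
  fun S => ∑ T : FormIdx n k, (B.submatrix (subEmb S) (subEmb T)).det * u T

/-- sign of the shuffle putting the block `t` before the block `s` -/
def shuffleSign {n : ℕ} (t s : Finset (Fin n)) : ℝ :=
  (-1 : ℝ) ^ (∑ x ∈ t, (s.filter (· < x)).card)

/-- exterior (wedge) product -/
def wedgeP {n k l : ℕ} (α : KForm n k) (β : KForm n l) : KForm n (k + l) :=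
  fun S => ∑ T : FormIdx n k, if h : T.1 ⊆ S.1 then
    shuffleSign T.1 (S.1 \ T.1) * α T * β ⟨S.1 \ T.1, by
      rw [Finset.card_sdiff, Finset.inter_eq_left.mpr h, S.2, T.2]; omega⟩ else 0

/-- the coefficient of `dx₁∧⋯∧dxₙ` of a top-degree form (zero unless `m = n`) -/
def topCoeff {n m : ℕ} (v : KForm n m) : ℝ :=
  if h : m = n then v ⟨Finset.univ, by subst h; simp⟩ else 0

/-- the standard Euclidean Hodge star -/
def hodgeStd {n l : ℕ} (hl : l ≤ n) (μ : KForm n l) : KForm n (n - l) :=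
  fun S => shuffleSign S.1ᶜ S.1 * μ ⟨S.1ᶜ, by
    rw [Finset.card_compl, S.2, Fintype.card_fin]; omega⟩

/-- re-indexing of a form along an equality of degrees -/
def castForm {n m m' : ℕ} (h : m = m') (v : KForm n m) : KForm n m' :=
  fun S => v ⟨S.1, by rw [S.2, h]⟩

/-! Since `(ω|μ)_A = ⟨ω, ∧ˡAᵀ μ⟩` and `ω ∧ *ν = ⟨ω, ν⟩ dx`, nondegeneracy of the wedge pairing
gives (i). Part (ii) then follows from `** = (−1)^{l(n−l)}` and the functoriality
`∧(BC) = ∧B ∘ ∧C` of minors (Cauchy–Binet). For (iii), `*^A ω ∧ *^A μ = ⟨∧A (*^A ω), μ⟩ dx`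
reduces the claim to `∧M ∘ * ∘ ∧Mᵀ = det M · *`. Both sides are multiplicative in `M`, so it
suffices to check it on diagonal matrices and on transvections; for a transvection it is a
parity count of shuffles. -/

open Matrix

section Minors

variable {R : Type*} [CommRing R] {n k m : ℕ}

lemma subEmb_strictMono (S : FormIdx n k) : StrictMono (subEmb S) :=
  (S.1.orderEmbOfFin S.2).strictMono

lemma subEmb_injective (S : FormIdx n k) : Function.Injective (subEmb S) :=
  (subEmb_strictMono S).injective

lemma subEmb_mem (S : FormIdx n k) (a : Fin k) : subEmb S a ∈ S.1 :=
  S.1.orderEmbOfFin_mem S.2 a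

lemma image_subEmb (S : FormIdx n k) : univ.image (subEmb S) = S.1 :=
  S.1.image_orderEmbOfFin_univ S.2

lemma exists_subEmb_eq (S : FormIdx n k) {x : Fin n} (hx : x ∈ S.1) : ∃ a, subEmb S a = x := by
  rw [← image_subEmb S] at hx
  simpa using hx

lemma image_subEmb_comp_succAbove (S : FormIdx n (m + 1)) (a : Fin (m + 1)) :
    univ.image (subEmb S ∘ a.succAbove) = S.1.erase (subEmb S a) := by
  rw [← image_image, ← image_subEmb S, ← image_erase (subEmb_injective S)]
  congr 1
  ext b
  simp

lemma StrictMono.eq_of_image_univ_eq {α : Type*} [LinearOrder α] {f g : Fin k → α}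
    (hf : StrictMono f) (hg : StrictMono g) (h : univ.image f = univ.image g) : f = g :=
  (hf.range_inj hg).mp (by simpa using congrArg ((↑) : Finset α → Set α) h)

def posIn (s : Finset (Fin n)) (x : Fin n) : ℕ := (s.filter (· < x)).card

lemma posIn_subEmb (S : FormIdx n k) (a : Fin k) : posIn S.1 (subEmb S a) = a := by
  have himg : S.1.filter (· < subEmb S a) = (Iio a).image (subEmb S) := by
    ext x
    simp only [mem_filter, mem_image, mem_Iio]
    constructor
    · rintro ⟨hxS, hlt⟩
      obtain ⟨b, rfl⟩ := exists_subEmb_eq S hxS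
      exact ⟨b, (subEmb_strictMono S).lt_iff_lt.mp hlt, rfl⟩
    · rintro ⟨b, hb, rfl⟩
      exact ⟨subEmb_mem S b, subEmb_strictMono S hb⟩
  rw [posIn, himg, card_image_of_injective _ (subEmb_injective S), Fin.card_Iio]

lemma det_diagonal_submatrix_of_strictMono (d : Fin n → R) {f g : Fin m → Fin n}
    (hf : StrictMono f) (hg : StrictMono g) :
    ((diagonal d).submatrix f g).det
      = if univ.image f = univ.image g then ∏ x ∈ univ.image f, d x else 0 := by
  split_ifs with h
  · obtain rfl := hf.eq_of_image_univ_eq hg h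
    rw [submatrix_diagonal _ _ hf.injective, det_diagonal, prod_image hf.injective.injOn]
    rfl
  · have hcard : (univ.image f).card ≤ (univ.image g).card := by
      rw [card_image_of_injective _ hf.injective, card_image_of_injective _ hg.injective]
    obtain ⟨x, hxg, hxf⟩ := not_subset.mp fun hsub => h (eq_of_subset_of_card_le hsub hcard).symm
    obtain ⟨b, -, rfl⟩ := mem_image.mp hxg
    refine det_eq_zero_of_column_eq_zero b fun a => diagonal_apply_ne _ fun hab => hxf ?_
    exact hab ▸ mem_image_of_mem f (mem_univ a)

lemma det_one_submatrix_of_strictMono {f g : Fin m → Fin n} (hf : StrictMono f)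
    (hg : StrictMono g) :
    ((1 : Matrix (Fin n) (Fin n) R).submatrix f g).det
      = if univ.image f = univ.image g then 1 else 0 := by
  rw [← diagonal_one, det_diagonal_submatrix_of_strictMono _ hf hg, prod_const_one]

lemma det_diagonal_submatrix_subEmb (d : Fin n → R) (S T : FormIdx n k) :
    ((diagonal d).submatrix (subEmb S) (subEmb T)).det
      = if S = T then ∏ x ∈ S.1, d x else 0 := by
  simp only [det_diagonal_submatrix_of_strictMono d (subEmb_strictMono S) (subEmb_strictMono T),
    image_subEmb, Subtype.ext_iff]

end Minors

section CauchyBinet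

variable {R : Type*} [CommRing R] {n k : ℕ}

def subEmbPerm (p : FormIdx n k × Equiv.Perm (Fin k)) :
    {f : Fin k → Fin n // Function.Injective f} :=
  ⟨subEmb p.1 ∘ p.2, (subEmb_injective p.1).comp p.2.injective⟩

lemma subEmbPerm_bijective : Function.Bijective (subEmbPerm (n := n) (k := k)) := by
  constructor
  · rintro ⟨S, σ⟩ ⟨T, τ⟩ h
    have hfun : subEmb S ∘ σ = subEmb T ∘ τ := congrArg Subtype.val h
    have himage : ∀ (U : FormIdx n k) (ρ : Equiv.Perm (Fin k)),
        univ.image (subEmb U ∘ ρ) = U.1 := by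
      intro U ρ
      rw [← image_image, image_univ_equiv, image_subEmb]
    obtain rfl : S = T := Subtype.ext (by rw [← himage S σ, hfun, himage])
    obtain rfl : σ = τ := Equiv.ext fun a => subEmb_injective S (congrFun hfun a)
    rfl
  · rintro ⟨f, hf⟩
    let U : FormIdx n k :=
      ⟨univ.image f, by rw [card_image_of_injective _ hf, card_univ, Fintype.card_fin]⟩
    choose g hg using fun a => exists_subEmb_eq U (mem_image_of_mem f (mem_univ a))
    have hg_inj : Function.Injective g := fun a b hab => hf (by rw [← hg, ← hg, hab])
    exact ⟨(U, Equiv.ofBijective g (Finite.injective_iff_bijective.mp hg_inj)),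
      Subtype.ext (funext hg)⟩

lemma det_submatrix_id_eq_zero_of_not_injective (M : Matrix (Fin k) (Fin n) R)
    {f : Fin k → Fin n} (hf : ¬ Function.Injective f) : (M.submatrix id f).det = 0 := by
  obtain ⟨a, b, hab, hne⟩ := Function.not_injective_iff.mp hf
  rw [← det_transpose, transpose_submatrix]
  exact det_zero_of_row_eq hne (funext fun x => by simp [hab])

theorem det_mul_eq_sum_subEmb (M : Matrix (Fin k) (Fin n) R) (N : Matrix (Fin n) (Fin k) R) :
    (M * N).det = ∑ U : FormIdx n k,
      (M.submatrix id (subEmb U)).det * (N.submatrix (subEmb U) id).det := by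
  classical
  have hexpand : (M * N).det = ∑ f : Fin k → Fin n, (∏ i, N (f i) i) * (M.submatrix id f).det := by
    simp only [det_apply', mul_apply, prod_univ_sum, Fintype.piFinset_univ, mul_sum]
    rw [sum_comm]
    refine sum_congr rfl fun f _ => sum_congr rfl fun σ _ => ?_
    rw [prod_mul_distrib]
    simp only [submatrix_apply, id_eq]
    ring
  have hperm : ∀ (U : FormIdx n k) (σ : Equiv.Perm (Fin k)),
      (M.submatrix id (subEmb U ∘ σ)).det = σ.sign * (M.submatrix id (subEmb U)).det := by
    intro U σ
    rw [← det_transpose, show M.submatrix id (subEmb U ∘ σ)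
      = (M.submatrix id (subEmb U)).submatrix id σ from rfl, transpose_submatrix, det_permute,
      det_transpose]
  have hinj : ∑ f : Fin k → Fin n, (∏ i, N (f i) i) * (M.submatrix id f).det
      = ∑ f : {f : Fin k → Fin n // Function.Injective f},
          (∏ i, N (f.1 i) i) * (M.submatrix id f.1).det := by
    rw [← sum_filter_add_sum_filter_not univ Function.Injective,
      sum_eq_zero (s := univ.filter (¬ Function.Injective ·)) fun f hf => by
        rw [det_submatrix_id_eq_zero_of_not_injective M (mem_filter.mp hf).2, mul_zero],
      add_zero, sum_subtype _ (p := Function.Injective) (fun _ => by simp)]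
  rw [hexpand, hinj, ← Fintype.sum_bijective _ subEmbPerm_bijective _ _ fun _ => rfl,
    Fintype.sum_prod_type]
  refine sum_congr rfl fun U _ => ?_
  rw [det_apply' (N.submatrix _ _), mul_sum]
  refine sum_congr rfl fun σ _ => ?_
  simp only [subEmbPerm, Function.comp_apply, hperm, submatrix_apply, id_eq]
  ring

lemma det_submatrix_mul_subEmb (B C : Matrix (Fin n) (Fin n) R) (S T : FormIdx n k) :
    ((B * C).submatrix (subEmb S) (subEmb T)).det
      = ∑ U : FormIdx n k,
          (B.submatrix (subEmb S) (subEmb U)).det * (C.submatrix (subEmb U) (subEmb T)).det := by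
  rw [submatrix_mul _ _ _ id _ Function.bijective_id, det_mul_eq_sum_subEmb]
  simp only [submatrix_submatrix, Function.id_comp, Function.comp_id]

end CauchyBinet

section Transvection

variable {R : Type*} [CommRing R] {n k m : ℕ}

lemma det_one_submatrix_subEmb (S T : FormIdx n k) :
    ((1 : Matrix (Fin n) (Fin n) R).submatrix (subEmb S) (subEmb T)).det
      = if S = T then 1 else 0 := by
  rw [← diagonal_one, det_diagonal_submatrix_subEmb, prod_const_one]

lemma det_updateRow_single_one_submatrix_subEmb (S U : FormIdx n (m + 1)) (a b : Fin (m + 1)) :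
    (((1 : Matrix (Fin n) (Fin n) R).submatrix (subEmb S) (subEmb U)).updateRow a
        (Pi.single b 1)).det
      = if S.1.erase (subEmb S a) = U.1.erase (subEmb U b)
        then (-1) ^ (posIn S.1 (subEmb S a) + posIn U.1 (subEmb U b)) else 0 := by
  rw [← adjugate_apply, adjugate_fin_succ_eq_det_submatrix, submatrix_submatrix,
    det_one_submatrix_of_strictMono ((subEmb_strictMono S).comp (Fin.strictMono_succAbove a))
      ((subEmb_strictMono U).comp (Fin.strictMono_succAbove b)),
    image_subEmb_comp_succAbove, image_subEmb_comp_succAbove, posIn_subEmb, posIn_subEmb]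
  split_ifs <;> simp

lemma det_transvection_submatrix_subEmb (i j : Fin n) (c : R) (S U : FormIdx n k) :
    ((transvection i j c).submatrix (subEmb S) (subEmb U)).det
      = (if S = U then 1 else 0)
        + c * (if i ∈ S.1 ∧ j ∈ U.1 ∧ S.1.erase i = U.1.erase j
               then (-1) ^ (posIn S.1 i + posIn U.1 j) else 0) := by
  show ((1 : Matrix (Fin n) (Fin n) R).submatrix (subEmb S) (subEmb U)
    + (single i j c).submatrix (subEmb S) (subEmb U)).det = _
  by_cases h : i ∈ S.1 ∧ j ∈ U.1
  · obtain ⟨a, rfl⟩ := exists_subEmb_eq S h.1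
    obtain ⟨b, rfl⟩ := exists_subEmb_eq U h.2
    obtain ⟨m, rfl⟩ := Nat.exists_eq_add_one_of_ne_zero a.pos.ne'
    set X := (1 : Matrix (Fin n) (Fin n) R).submatrix (subEmb S) (subEmb U)
    have hsingle : (single (subEmb S a) (subEmb U b) c).submatrix (subEmb S) (subEmb U)
        = single a b c := by
      ext a' b'
      simp [single_apply, (subEmb_injective S).eq_iff, (subEmb_injective U).eq_iff]
    have hrow : X + single a b c = X.updateRow a (X a + c • Pi.single b 1) := by
      ext a' b'
      by_cases ha : a' = a
      · subst ha
        simp [single_apply, Pi.single_apply, eq_comm]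
      · simp [updateRow_ne ha, Ne.symm ha]
    rw [hsingle, hrow, det_updateRow_add, updateRow_eq_self, det_updateRow_smul,
      det_updateRow_single_one_submatrix_subEmb, det_one_submatrix_subEmb]
    simp [subEmb_mem]
  · have hsingle : (single i j c).submatrix (subEmb S) (subEmb U) = 0 := by
      ext a b
      simp only [submatrix_apply, single_apply, Matrix.zero_apply, ite_eq_right_iff]
      rintro ⟨rfl, rfl⟩
      exact absurd ⟨subEmb_mem S a, subEmb_mem U b⟩ h
    rw [hsingle, add_zero, det_one_submatrix_subEmb,
      if_neg (c := i ∈ S.1 ∧ _) fun h' => h ⟨h'.1, h'.2.1⟩, mul_zero, add_zero]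

lemma transvection_transpose {ι : Type*} [DecidableEq ι] (i j : ι) (c : R) :
    (transvection i j c)ᵀ = transvection j i c := by
  rw [transvection, transpose_add, transpose_one, transpose_single, transvection]

end Transvection

section FormMap

variable {n k : ℕ}

lemma formMap_diagonal_apply (d : Fin n → ℝ) (u : KForm n k) (S : FormIdx n k) :
    formMap (diagonal d) u S = (∏ x ∈ S.1, d x) * u S := by
  simp [formMap, det_diagonal_submatrix_subEmb]

lemma formMap_one (u : KForm n k) : formMap 1 u = u := by
  funext S
  rw [← diagonal_one, formMap_diagonal_apply, prod_const_one, one_mul]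

lemma formMap_smul (B : Matrix (Fin n) (Fin n) ℝ) (c : ℝ) (u : KForm n k) :
    formMap B (c • u) = c • formMap B u := by
  funext S
  simp only [formMap, Pi.smul_apply, smul_eq_mul, mul_sum]
  exact sum_congr rfl fun T _ => by ring

lemma formMap_mul (B C : Matrix (Fin n) (Fin n) ℝ) (u : KForm n k) :
    formMap (B * C) u = formMap B (formMap C u) := by
  funext S
  simp only [formMap, det_submatrix_mul_subEmb, sum_mul, mul_sum]
  rw [sum_comm]
  exact sum_congr rfl fun U _ => sum_congr rfl fun T _ => by ring

lemma formMap_transvection_apply {i j : Fin n} (c : ℝ) (u : KForm n k) {S S' : FormIdx n k}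
    (hi : i ∈ S.1) (hj : j ∉ S.1) (hS' : S'.1 = insert j (S.1.erase i)) :
    formMap (transvection i j c) u S = u S + c * (-1) ^ (posIn S.1 i + posIn S'.1 j) * u S' := by
  have hT : ∀ T : FormIdx n k, (i ∈ S.1 ∧ j ∈ T.1 ∧ S.1.erase i = T.1.erase j) ↔ T = S' := by
    intro T
    rw [Subtype.ext_iff, hS']
    constructor
    · rintro ⟨-, hjT, he⟩
      rw [he, insert_erase hjT]
    · rintro h
      rw [h]
      exact ⟨hi, mem_insert_self _ _, (erase_insert fun h => hj (mem_of_mem_erase h)).symm⟩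
  simp only [formMap, det_transvection_submatrix_subEmb, add_mul, sum_add_distrib, hT]
  simp

lemma formMap_transvection_apply_of_imp {i j : Fin n} (hij : i ≠ j) (c : ℝ) (u : KForm n k)
    {S : FormIdx n k} (h : i ∈ S.1 → j ∈ S.1) : formMap (transvection i j c) u S = u S := by
  have hT : ∀ T : FormIdx n k, ¬ (i ∈ S.1 ∧ j ∈ T.1 ∧ S.1.erase i = T.1.erase j) := by
    rintro T ⟨hi, -, he⟩
    have hj : j ∈ S.1.erase i := mem_erase.mpr ⟨hij.symm, h hi⟩
    rw [he] at hj
    exact notMem_erase j T.1 hj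
  simp [formMap, det_transvection_submatrix_subEmb, hT]

end FormMap

section ShuffleSign

variable {n : ℕ}

def shuffleCount (t s : Finset (Fin n)) : ℕ := ∑ x ∈ t, posIn s x

lemma shuffleSign_eq_neg_one_pow (t s : Finset (Fin n)) :
    shuffleSign t s = (-1 : ℝ) ^ shuffleCount t s := rfl

lemma shuffleSign_mul_self (t s : Finset (Fin n)) : shuffleSign t s * shuffleSign t s = 1 := by
  rw [shuffleSign_eq_neg_one_pow, ← pow_add]
  exact Even.neg_one_pow ⟨_, rfl⟩

lemma shuffleSign_ne_zero (t s : Finset (Fin n)) : shuffleSign t s ≠ 0 :=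
  pow_ne_zero _ (neg_ne_zero.mpr one_ne_zero)

lemma neg_one_pow_add_neg_one_pow_of_odd {R : Type*} [CommRing R] {a b : ℕ} (h : Odd (a + b)) :
    (-1 : R) ^ a + (-1) ^ b = 0 := by
  have hab : (-1 : R) ^ a * (-1) ^ b = -1 := by rw [← pow_add, h.neg_one_pow]
  have hbb : (-1 : R) ^ b * (-1) ^ b = 1 := by rw [← pow_add, Even.neg_one_pow ⟨b, rfl⟩]
  linear_combination (-1 : R) ^ b * hab - (-1 : R) ^ a * hbb

lemma posIn_insert {s : Finset (Fin n)} {a : Fin n} (ha : a ∉ s) (x : Fin n) :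
    posIn (insert a s) x = posIn s x + if a < x then 1 else 0 := by
  unfold posIn
  rw [filter_insert]
  split_ifs
  · rw [card_insert_of_notMem fun h => ha (mem_of_mem_filter _ h)]
  · rfl

lemma posIn_insert_self (s : Finset (Fin n)) (a : Fin n) : posIn (insert a s) a = posIn s a := by
  rw [posIn, filter_insert, if_neg (lt_irrefl a), posIn]

lemma posIn_add_card_filter_lt {s : Finset (Fin n)} {a : Fin n} (ha : a ∉ s) :
    posIn s a + (s.filter (a < ·)).card = s.card := by
  rw [posIn, filter_congr (q := fun x => ¬ x < a) fun x hx =>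
    ⟨lt_asymm, fun h => (not_lt.mp h).lt_of_ne fun hxa => ha (hxa ▸ hx)⟩]
  exact card_filter_add_card_filter_not _

lemma shuffleCount_insert_left {t : Finset (Fin n)} (s : Finset (Fin n)) {a : Fin n}
    (ha : a ∉ t) : shuffleCount (insert a t) s = posIn s a + shuffleCount t s :=
  sum_insert ha

lemma shuffleCount_insert_right (t : Finset (Fin n)) {s : Finset (Fin n)} {a : Fin n}
    (ha : a ∉ s) : shuffleCount t (insert a s) = shuffleCount t s + (t.filter (a < ·)).card := by
  rw [shuffleCount, shuffleCount, card_filter, ← sum_add_distrib]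
  exact sum_congr rfl fun x _ => posIn_insert ha x

lemma shuffleCount_add_shuffleCount {t s : Finset (Fin n)} (h : Disjoint t s) :
    shuffleCount t s + shuffleCount s t = t.card * s.card := by
  simp only [shuffleCount, posIn, card_filter]
  rw [sum_comm (s := s), ← sum_add_distrib, ← smul_eq_mul, ← sum_const]
  refine sum_congr rfl fun x hx => ?_
  rw [← sum_add_distrib, card_eq_sum_ones]
  refine sum_congr rfl fun y hy => ?_
  rcases lt_or_gt_of_ne fun hxy : y = x => disjoint_left.mp h hx (hxy ▸ hy) with hlt | hgt
  · rw [if_pos hlt, if_neg (lt_asymm hlt)]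
  · rw [if_neg (lt_asymm hgt), if_pos hgt]

lemma shuffleSign_compl_mul (s : Finset (Fin n)) :
    shuffleSign sᶜ s * shuffleSign s sᶜ = (-1 : ℝ) ^ (sᶜ.card * s.card) := by
  rw [shuffleSign_eq_neg_one_pow, shuffleSign_eq_neg_one_pow, ← pow_add,
    shuffleCount_add_shuffleCount disjoint_compl_left]

/-- For `S = insert i A` and `Sᶜ = insert j B`, this is the cancellation of the two `c`-terms of
`∧T ∘ * ∘ ∧Tᵀ` at `S`, for the transvection `T = 1 + c E_ij`. -/
lemma shuffleSign_transvection_cancel {A B : Finset (Fin n)} {i j : Fin n} (hij : i ≠ j)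
    (hiA : i ∉ A) (hjA : j ∉ A) (hiB : i ∉ B) (hjB : j ∉ B) :
    shuffleSign (insert j B) (insert i A) * (-1) ^ (posIn (insert j B) j + posIn (insert i B) i)
      + (-1) ^ (posIn (insert i A) i + posIn (insert j A) j)
        * shuffleSign (insert i B) (insert j A) = 0 := by
  have hodd : Odd (shuffleCount (insert j B) (insert i A)
      + (posIn (insert j B) j + posIn (insert i B) i)
      + (posIn (insert i A) i + posIn (insert j A) j
        + shuffleCount (insert i B) (insert j A))) := by
    rw [shuffleCount_insert_left _ hjB, shuffleCount_insert_left _ hiB,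
      shuffleCount_insert_right _ hiA, shuffleCount_insert_right _ hjA, posIn_insert_self,
      posIn_insert_self, posIn_insert_self, posIn_insert_self, posIn_insert hiA j,
      posIn_insert hjA i, Nat.odd_iff]
    have hi := posIn_add_card_filter_lt hiB
    have hj := posIn_add_card_filter_lt hjB
    rcases lt_or_gt_of_ne hij with hlt | hgt
    · rw [if_pos hlt, if_neg (lt_asymm hlt)]
      omega
    · rw [if_neg (lt_asymm hgt), if_pos hgt]
      omega
  rw [shuffleSign_eq_neg_one_pow, shuffleSign_eq_neg_one_pow, ← pow_add, ← pow_add]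
  exact neg_one_pow_add_neg_one_pow_of_odd hodd

end ShuffleSign

section Hodge

variable {n k l : ℕ}

def complIdx (hk : k ≤ n) : FormIdx n k ≃ FormIdx n (n - k) where
  toFun T := ⟨T.1ᶜ, by rw [card_compl, T.2, Fintype.card_fin]⟩
  invFun S := ⟨S.1ᶜ, by rw [card_compl, S.2, Fintype.card_fin]; omega⟩
  left_inv T := Subtype.ext (compl_compl T.1)
  right_inv S := Subtype.ext (compl_compl S.1)

lemma hodgeStd_apply_of_val_eq_compl (hk : k ≤ n) (u : KForm n k) {S : FormIdx n (n - k)}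
    {C : FormIdx n k} (hC : C.1 = S.1ᶜ) : hodgeStd hk u S = shuffleSign C.1 S.1 * u C := by
  obtain rfl : C = (complIdx hk).symm S := Subtype.ext hC
  rfl

lemma hodgeStd_complIdx (hk : k ≤ n) (u : KForm n k) (T : FormIdx n k) :
    hodgeStd hk u (complIdx hk T) = shuffleSign T.1 T.1ᶜ * u T :=
  hodgeStd_apply_of_val_eq_compl hk u (compl_compl T.1).symm

lemma hodgeStd_smul (hk : k ≤ n) (c : ℝ) (u : KForm n k) :
    hodgeStd hk (c • u) = c • hodgeStd hk u := by
  funext S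
  simp only [hodgeStd, Pi.smul_apply, smul_eq_mul]
  ring

lemma topCoeff_wedgeP (hk : k ≤ n) (α : KForm n k) (β : KForm n (n - k)) :
    topCoeff (wedgeP α β) = ∑ T, shuffleSign T.1 T.1ᶜ * α T * β (complIdx hk T) := by
  rw [topCoeff, dif_pos (by omega)]
  refine sum_congr rfl fun T _ => ?_
  rw [dif_pos (subset_univ _)]
  simp only [← compl_eq_univ_sdiff]
  rfl

lemma topCoeff_wedgeP_hodgeStd (hk : k ≤ n) (ω ν : KForm n k) :
    topCoeff (wedgeP ω (hodgeStd hk ν)) = ∑ T, ω T * ν T := by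
  rw [topCoeff_wedgeP hk]
  refine sum_congr rfl fun T _ => ?_
  rw [hodgeStd_complIdx]
  linear_combination ω T * ν T * shuffleSign_mul_self T.1 T.1ᶜ

lemma sum_hodgeStd_mul (hk : k ≤ n) (α : KForm n k) (β : KForm n (n - k)) :
    ∑ S, hodgeStd hk α S * β S = topCoeff (wedgeP α β) := by
  rw [topCoeff_wedgeP hk, ← (complIdx hk).sum_comp]
  simp only [hodgeStd_complIdx]

lemma eq_of_forall_topCoeff_wedgeP_eq (hk : k ≤ n) {ν ν' : KForm n (n - k)}
    (h : ∀ ω : KForm n k, topCoeff (wedgeP ω ν) = topCoeff (wedgeP ω ν')) : ν = ν' := by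
  have hsingle : ∀ (T : FormIdx n k) (β : KForm n (n - k)),
      topCoeff (wedgeP (Pi.single T 1) β) = shuffleSign T.1 T.1ᶜ * β (complIdx hk T) := by
    intro T β
    rw [topCoeff_wedgeP hk, sum_eq_single T (fun T' _ hT' => by simp [hT']) (by simp)]
    simp
  funext S
  obtain ⟨T, rfl⟩ := (complIdx hk).surjective S
  have hT := h (Pi.single T 1)
  rw [hsingle, hsingle] at hT
  exact mul_left_cancel₀ (shuffleSign_ne_zero _ _) hT

lemma castForm_hodgeStd_castForm_hodgeStd {a b : ℕ} (ha : a ≤ n) (hb : b ≤ n) (hab : n - a = b)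
    (hba : n - b = a) (ν : KForm n a) :
    castForm hba (hodgeStd hb (castForm hab (hodgeStd ha ν))) = (-1 : ℝ) ^ (a * b) • ν := by
  funext S
  have hsign := shuffleSign_compl_mul S.1
  rw [card_compl, Fintype.card_fin, S.2, hab] at hsign
  simp only [castForm, hodgeStd, compl_compl, Pi.smul_apply, smul_eq_mul]
  linear_combination ν S * hsign

lemma hodgeStd_castForm_hodgeStd (hl : l ≤ n) (ν : KForm n (n - l)) :
    hodgeStd hl (castForm (Nat.sub_sub_self hl) (hodgeStd (Nat.sub_le n l) ν))
      = (-1 : ℝ) ^ (l * (n - l)) • ν := by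
  rw [mul_comm]
  exact castForm_hodgeStd_castForm_hodgeStd (Nat.sub_le n l) hl (Nat.sub_sub_self hl) rfl ν

lemma castForm_hodgeStd_hodgeStd (hl : l ≤ n) (ω : KForm n l) :
    castForm (Nat.sub_sub_self hl) (hodgeStd (Nat.sub_le n l) (hodgeStd hl ω))
      = (-1 : ℝ) ^ (l * (n - l)) • ω :=
  castForm_hodgeStd_castForm_hodgeStd hl (Nat.sub_le n l) rfl (Nat.sub_sub_self hl) ω

lemma pairingA_eq_sum_formMap_mul (A : Matrix (Fin n) (Fin n) ℝ) (u v : KForm n k) :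
    pairingA A u v = ∑ S, formMap A u S * v S := by
  rw [pairingA, sum_comm]
  simp only [formMap, sum_mul]

lemma pairingA_eq_sum_mul_formMap_transpose (A : Matrix (Fin n) (Fin n) ℝ) (u v : KForm n k) :
    pairingA A u v = ∑ T, u T * formMap Aᵀ v T := by
  simp only [pairingA, formMap, mul_sum, ← transpose_submatrix, det_transpose]
  exact sum_congr rfl fun T _ => sum_congr rfl fun S _ => by ring

lemma formMap_diagonal_hodgeStd (hl : l ≤ n) (d : Fin n → ℝ) (ω : KForm n l) :
    formMap (diagonal d) (hodgeStd hl (formMap (diagonal d)ᵀ ω))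
      = (diagonal d).det • hodgeStd hl ω := by
  funext S
  rw [diagonal_transpose, formMap_diagonal_apply, Pi.smul_apply, smul_eq_mul, det_diagonal,
    ← prod_mul_prod_compl S.1 d]
  simp only [hodgeStd, formMap_diagonal_apply]
  ring

lemma card_insert_erase_of_mem_of_notMem {α : Type*} [DecidableEq α] {s : Finset α} {i j : α}
    (hi : i ∈ s) (hj : j ∉ s) : (insert j (s.erase i)).card = s.card := by
  rw [card_insert_of_notMem fun h => hj (mem_of_mem_erase h), card_erase_add_one hi]

lemma formMap_transvection_hodgeStd (hl : l ≤ n) {i j : Fin n} (hij : i ≠ j) (c : ℝ)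
    (ω : KForm n l) :
    formMap (transvection i j c) (hodgeStd hl (formMap (transvection j i c) ω))
      = hodgeStd hl ω := by
  funext S
  obtain ⟨C, hC⟩ : ∃ C : FormIdx n l, C.1 = S.1ᶜ := ⟨(complIdx hl).symm S, rfl⟩
  by_cases h : i ∈ S.1 ∧ j ∉ S.1
  · obtain ⟨hi, hj⟩ := h
    have hjC : j ∈ C.1 := hC ▸ mem_compl.mpr hj
    have hiC : i ∉ C.1 := hC ▸ fun h => mem_compl.mp h hi
    obtain ⟨S', hS'⟩ : ∃ S' : FormIdx n (n - l), S'.1 = insert j (S.1.erase i) :=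
      ⟨⟨_, (card_insert_erase_of_mem_of_notMem hi hj).trans S.2⟩, rfl⟩
    obtain ⟨C', hC'⟩ : ∃ C' : FormIdx n l, C'.1 = insert i (C.1.erase j) :=
      ⟨⟨_, (card_insert_erase_of_mem_of_notMem hjC hiC).trans C.2⟩, rfl⟩
    have hC'S' : C'.1 = S'.1ᶜ := by
      rw [hC', hS', hC, compl_insert, compl_erase, erase_insert_of_ne hij]
    rw [formMap_transvection_apply c _ hi hj hS', hodgeStd_apply_of_val_eq_compl hl _ hC,
      hodgeStd_apply_of_val_eq_compl hl _ hC'S', hodgeStd_apply_of_val_eq_compl hl _ hC,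
      formMap_transvection_apply c ω hjC hiC hC',
      formMap_transvection_apply_of_imp hij.symm c ω fun _ => hC' ▸ mem_insert_self i _]
    have hcancel := shuffleSign_transvection_cancel hij (notMem_erase i S.1)
      (fun h => hj (mem_of_mem_erase h)) (fun h => hiC (mem_of_mem_erase h)) (notMem_erase j C.1)
    rw [insert_erase hi, insert_erase hjC, ← hS', ← hC'] at hcancel
    linear_combination c * ω C' * hcancel
  · have hCS : j ∈ C.1 → i ∈ C.1 := by
      rw [hC, mem_compl, mem_compl]
      tauto
    rw [formMap_transvection_apply_of_imp hij c _ (by tauto),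
      hodgeStd_apply_of_val_eq_compl hl _ hC, hodgeStd_apply_of_val_eq_compl hl _ hC,
      formMap_transvection_apply_of_imp hij.symm c ω hCS]

theorem formMap_hodgeStd_formMap_transpose (hl : l ≤ n) (M : Matrix (Fin n) (Fin n) ℝ)
    (ω : KForm n l) : formMap M (hodgeStd hl (formMap Mᵀ ω)) = M.det • hodgeStd hl ω := by
  induction M using diagonal_transvection_induction generalizing ω with
  | hdiag d _ => exact formMap_diagonal_hodgeStd hl d ω
  | htransvec t =>
    rw [TransvectionStruct.det, one_smul, TransvectionStruct.toMatrix, transvection_transpose]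
    exact formMap_transvection_hodgeStd hl t.hij t.c ω
  | hmul B C hB hC =>
    rw [transpose_mul, formMap_mul, formMap_mul, hC, formMap_smul, hB, det_mul, smul_smul,
      mul_comm]

end Hodge

/-- Properties of the twisted Hodge operator `*^A`, characterized by
`ω ∧ (*^A μ) = (ω|μ)_A dx`:  (i) `*^A = * ∘ ∧ˡ(ι⁻¹Aᵗ)`; (ii) `*^A` is invertible with
`(*^A)⁻¹ = (−1)^{l(n−l)} ∧ˡ(ι⁻¹Aᵗ)⁻¹ ∘ *`; (iii) `(*^A ω) ∧ (*^A μ) = det(ι⁻¹Aᵗ)·ω ∧ μ`. -/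
theorem twisted_hodge_properties {n l : ℕ} (hl : l ≤ n)
    (A : Matrix (Fin n) (Fin n) ℝ) (hA : IsUnit A.det)
    (star₁ : KForm n l → KForm n (n - l))
    (star₂ : KForm n (n - l) → KForm n (n - (n - l)))
    (hstar₁ : ∀ ω μ : KForm n l, topCoeff (wedgeP ω (star₁ μ)) = pairingA A ω μ)
    (hstar₂ : ∀ ω μ : KForm n (n - l), topCoeff (wedgeP ω (star₂ μ)) = pairingA A ω μ) :
    (∀ μ : KForm n l, star₁ μ = hodgeStd hl (formMap A.transpose μ)) ∧
    (∀ ν : KForm n (n - l),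
      star₁ ((-1 : ℝ) ^ (l * (n - l)) •
        formMap A.transpose⁻¹ (castForm (by omega) (hodgeStd (Nat.sub_le n l) ν))) = ν) ∧
    (∀ μ : KForm n l,
      (-1 : ℝ) ^ (l * (n - l)) •
        formMap A.transpose⁻¹ (castForm (by omega) (hodgeStd (Nat.sub_le n l) (star₁ μ)))
      = μ) ∧
    (∀ (ω : KForm n l) (μ : KForm n (n - l)),
      topCoeff (wedgeP (star₁ ω) (star₂ μ)) = A.transpose.det * topCoeff (wedgeP ω μ)) := by
  have hAT : IsUnit A.transpose.det := by rwa [det_transpose]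
  have hstar : ∀ μ : KForm n l, star₁ μ = hodgeStd hl (formMap A.transpose μ) := fun μ =>
    eq_of_forall_topCoeff_wedgeP_eq hl fun ω => by
      rw [hstar₁, topCoeff_wedgeP_hodgeStd, pairingA_eq_sum_mul_formMap_transpose]
  have hsign : (-1 : ℝ) ^ (l * (n - l)) * (-1) ^ (l * (n - l)) = 1 := by
    rw [← pow_add, Even.neg_one_pow ⟨_, rfl⟩]
  refine ⟨hstar, fun ν => ?_, fun μ => ?_, fun ω μ => ?_⟩
  · rw [hstar, formMap_smul, hodgeStd_smul, ← formMap_mul, mul_nonsing_inv _ hAT, formMap_one,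
      hodgeStd_castForm_hodgeStd, smul_smul, hsign, one_smul]
  · rw [hstar, castForm_hodgeStd_hodgeStd, formMap_smul, ← formMap_mul, nonsing_inv_mul _ hAT,
      formMap_one, smul_smul, hsign, one_smul]
  · rw [hstar₂, pairingA_eq_sum_formMap_mul, hstar, formMap_hodgeStd_formMap_transpose,
      det_transpose, ← sum_hodgeStd_mul hl, mul_sum]
    simp only [Pi.smul_apply, smul_eq_mul, mul_assoc]
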